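/- arXiv:2605.17945 — 5 statements merged into one kernel-verified Lean document; each statement's English description precedes it below -/
import Mathlib

section
/- If F is an intersecting family of k-subsets of [n] with k ≥ 2 and n ≥ 2k + ⌈(√(8k+1)−1)/2⌉ + 3, then the minimum (k−1)-degree of F is at most 1; that is, there exists a (k−1)-subset S of [n] contained in at most one member of F. -/
open Finset

/-- Auxiliary potential function: `auxf j = j*(j-1)+2` for `j ≥ 1`, and `auxf 0 = 0`. -/
private def auxf (j : ℕ) : ℕ := if j = 0 then 0 else j * (j - 1) + 2

private lemma auxf_mono : Monotone auxf := by
  intro a b hab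
  unfold auxf
  rcases Nat.eq_zero_or_pos a with ha | ha
  · subst ha; simp
  · have hb : b ≠ 0 := by omega
    have ha' : a ≠ 0 := by omega
    simp only [ha', hb, if_false]
    have h1 : a - 1 ≤ b - 1 := by omega
    have := Nat.mul_le_mul hab h1
    omega

private lemma auxf_succ (j : ℕ) : auxf (j + 1) ≤ auxf j + 2 * max j 1 := by
  cases j with
  | zero => simp [auxf]
  | succ j' =>
    simp only [auxf, Nat.succ_ne_zero, if_false, Nat.add_sub_cancel]
    have hmax : max (j' + 1) 1 = j' + 1 := by omega
    rw [hmax]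
    nlinarith

/-- Codegree EKR for d = k-1: if F is an intersecting family of k-subsets of [n]
with k ≥ 2 and n ≥ 2k + ⌈(√(8k+1)−1)/2⌉ + 3, then some (k−1)-subset is contained
in at most one member of F. -/
theorem stmt0 (n k : ℕ) (hk : 2 ≤ k)
    (hn : n ≥ 2 * k + ⌈(Real.sqrt (8 * (k : ℝ) + 1) - 1) / 2⌉₊ + 3)
    (F : Finset (Finset (Fin n)))
    (hcard : ∀ e ∈ F, e.card = k)
    (hint : ∀ A ∈ F, ∀ B ∈ F, (A ∩ B).Nonempty) :
    ∃ S : Finset (Fin n), S.card = k - 1 ∧ (F.filter (fun e => S ⊆ e)).card ≤ 1 := by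
  by_contra hcon
  push_neg at hcon
  -- hcon : ∀ S, S.card = k - 1 → 1 < (F.filter (fun e => S ⊆ e)).card
  set t := ⌈(Real.sqrt (8 * (k : ℝ) + 1) - 1) / 2⌉₊ with ht_def
  -- key triangular-number property of t
  have ht : 2 * k ≤ t * (t + 1) := by
    have h1 : ((Real.sqrt (8 * (k : ℝ) + 1) - 1) / 2) ≤ (t : ℝ) := Nat.le_ceil _
    have h2 : Real.sqrt (8 * (k : ℝ) + 1) ≤ 2 * (t : ℝ) + 1 := by linarith
    have h0 : (0:ℝ) ≤ 8 * (k : ℝ) + 1 := by positivity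
    have h3 : (8 * (k : ℝ) + 1) ≤ (2 * (t : ℝ) + 1) ^ 2 := by
      calc (8 * (k : ℝ) + 1) = Real.sqrt (8 * (k : ℝ) + 1) ^ 2 := (Real.sq_sqrt h0).symm
        _ ≤ (2 * (t : ℝ) + 1) ^ 2 := by
            apply pow_le_pow_left₀ (Real.sqrt_nonneg _) h2
    have h4 : (8 * k + 1 : ℕ) ≤ (2 * t + 1) ^ 2 := by exact_mod_cast h3
    nlinarith
  -- extension lemma: any (k-1)-set has two extensions, so can avoid a designated point
  have ext_lem : ∀ S : Finset (Fin n), S.card = k - 1 → ∀ x : Fin n,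
      ∃ z, z ∉ S ∧ z ≠ x ∧ insert z S ∈ F := by
    intro S hS x
    have h2 := hcon S hS
    obtain ⟨a, ha, b, hb, hab⟩ := Finset.one_lt_card.mp h2
    simp only [mem_filter] at ha hb
    obtain ⟨haF, haS⟩ := ha
    obtain ⟨hbF, hbS⟩ := hb
    have haC : a.card = k := hcard a haF
    have hbC : b.card = k := hcard b hbF
    have hsa : (a \ S).card = 1 := by rw [card_sdiff_of_subset haS]; omega
    have hsb : (b \ S).card = 1 := by rw [card_sdiff_of_subset hbS]; omega
    obtain ⟨za, hza⟩ := Finset.card_eq_one.mp hsa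
    obtain ⟨zb, hzb⟩ := Finset.card_eq_one.mp hsb
    have hzaS : za ∉ S ∧ za ∈ a := by
      have : za ∈ a \ S := by rw [hza]; exact mem_singleton_self _
      exact ⟨(mem_sdiff.mp this).2, (mem_sdiff.mp this).1⟩
    have hzbS : zb ∉ S ∧ zb ∈ b := by
      have : zb ∈ b \ S := by rw [hzb]; exact mem_singleton_self _
      exact ⟨(mem_sdiff.mp this).2, (mem_sdiff.mp this).1⟩
    have haeq : a = insert za S := by
      have h1 : S ∪ a \ S = a := union_sdiff_of_subset haS
      rw [hza] at h1
      rw [Finset.insert_eq, Finset.union_comm, ← h1]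
    have hbeq : b = insert zb S := by
      have h1 : S ∪ b \ S = b := union_sdiff_of_subset hbS
      rw [hzb] at h1
      rw [Finset.insert_eq, Finset.union_comm, ← h1]
    have hzazb : za ≠ zb := by
      intro h
      apply hab
      rw [haeq, hbeq, h]
    by_cases hza_x : za = x
    · exact ⟨zb, hzbS.1, by rw [← hza_x]; exact hzazb.symm, by rw [← hbeq]; exact hbF⟩
    · exact ⟨za, hzaS.1, hza_x, by rw [← haeq]; exact haF⟩
  -- the main recursive construction
  have key : ∀ m : ℕ, ∀ G : Finset (Finset (Fin n)), ∀ D : Finset (Fin n),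
      G ⊆ F → D ∈ G →
      (2 ≤ ((G.sup id).filter (fun x => ∀ C ∈ G, x ∈ C)).card →
        2 * ((G.sup id).filter (fun x => ∀ C ∈ G, x ∈ C)).card
          + auxf ((G.sup id).card - k) ≤ 2 * k) →
      ((G.sup id).filter (fun x => ∀ C ∈ G, x ∈ C)).card ≤ m →
      ∃ G' : Finset (Finset (Fin n)), G' ⊆ F ∧ G'.Nonempty ∧
        (G'.sup id).card ≤ max (G.sup id).card (k + t + 1) ∧
        ((G'.sup id).filter (fun x => ∀ C ∈ G', x ∈ C)).card ≤ 1 := by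
    intro m
    induction m with
    | zero =>
      intro G D hGF hD _ hm
      exact ⟨G, hGF, ⟨D, hD⟩, le_max_left _ _, le_trans hm (by omega)⟩
    | succ m ih =>
      intro G D hGF hD hinv hm
      set U := G.sup id with hU_def
      set I := U.filter (fun x => ∀ C ∈ G, x ∈ C) with hI_def
      by_cases h1 : I.card ≤ 1
      · exact ⟨G, hGF, ⟨D, hD⟩, le_max_left _ _, h1⟩
      push_neg at h1
      have h2 : 2 ≤ I.card := h1
      have hDF : D ∈ F := hGF hD
      have hDcard : D.card = k := hcard D hDF
      have hDU : D ⊆ U := Finset.le_sup (f := id) hD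
      have hUk : k ≤ U.card := hDcard ▸ card_le_card hDU
      have hID : I ⊆ D := by
        intro x hx
        exact (mem_filter.mp hx).2 D hD
      have hIU : I ⊆ U := filter_subset _ _
      set j := U.card - k with hj_def
      have hUDj : (U \ D).card = j := by rw [card_sdiff_of_subset hDU, hDcard]
      -- the invariant bound, and j ≤ t
      have hinv2 := hinv h2
      have hjt : j ≤ t := by
        by_contra hjt
        push_neg at hjt
        have h3 : auxf (t + 1) ≤ auxf j := auxf_mono hjt
        have h4 : auxf (t + 1) = t * (t + 1) + 2 := by
          simp [auxf]; ring
        omega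
      -- choose X ⊆ I with |X| = min |I| (j+1)
      have hminle : min I.card (j + 1) ≤ I.card := min_le_left _ _
      obtain ⟨X, hXI, hXcard⟩ := Finset.exists_subset_card_eq hminle
      have hXpos : 0 < X.card := by rw [hXcard]; omega
      obtain ⟨xs, hxs⟩ := Finset.card_pos.mp hXpos
      have hXD : X ⊆ D := hXI.trans hID
      have hXle : X.card ≤ j + 1 := by rw [hXcard]; exact min_le_right _ _
      have hXlek : X.card ≤ k := hDcard ▸ card_le_card hXD
      -- choose Y ⊆ U \ D with |Y| = |X| - 1
      have hYle : X.card - 1 ≤ (U \ D).card := by omega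
      obtain ⟨Y, hYsub, hYcard⟩ := Finset.exists_subset_card_eq hYle
      -- the swap set S
      set S := (D \ X) ∪ Y with hS_def
      have hdisj : Disjoint (D \ X) Y := by
        apply Finset.disjoint_left.mpr
        intro x hx hxY
        exact (mem_sdiff.mp (hYsub hxY)).2 (mem_sdiff.mp hx).1
      have hScard : S.card = k - 1 := by
        rw [card_union_of_disjoint hdisj, card_sdiff_of_subset hXD, hDcard, hYcard]
        omega
      have hSU : S ⊆ U := by
        apply union_subset
        · exact (sdiff_subset).trans hDU
        · exact hYsub.trans sdiff_subset
      -- get the new member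
      obtain ⟨z, hzS, hzxs, hzF⟩ := ext_lem S hScard xs
      set D' := insert z S with hD'_def
      set G' := insert D' G with hG'_def
      have hG'F : G' ⊆ F := by
        rw [hG'_def, Finset.insert_subset_iff]
        exact ⟨hzF, hGF⟩
      have hD'G' : D' ∈ G' := mem_insert_self _ _
      set U' := G'.sup id with hU'_def
      set I' := U'.filter (fun x => ∀ C ∈ G', x ∈ C) with hI'_def
      have hU'eq : U' = D' ∪ U := by rw [hU'_def, hG'_def, Finset.sup_insert]; rfl
      have hU'sub : U' ⊆ insert z U := by
        rw [hU'eq]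
        apply union_subset
        · rw [hD'_def]
          exact insert_subset_insert _ hSU
        · exact subset_insert _ _
      have hU'card : U'.card ≤ U.card + 1 :=
        le_trans (card_le_card hU'sub) (card_insert_le _ _)
      have hUU' : U ⊆ U' := by rw [hU'eq]; exact subset_union_right
      -- I' ⊆ I and membership in D'
      have hI'I : ∀ x ∈ I', x ∈ I ∧ x ∈ D' := by
        intro x hx
        rw [hI'_def, mem_filter] at hx
        obtain ⟨hxU', hxall⟩ := hx
        have hxD : x ∈ D := hxall D (mem_insert_of_mem hD)
        have hxU : x ∈ U := hDU hxD
        refine ⟨?_, hxall D' hD'G'⟩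
        rw [hI_def, mem_filter]
        exact ⟨hxU, fun C hC => hxall C (mem_insert_of_mem hC)⟩
      -- x ∈ I' implies x ∈ (I \ X) ∪ {z}
      have hI'sub : I' ⊆ (I \ X) ∪ {z} := by
        intro x hx
        obtain ⟨hxI, hxD'⟩ := hI'I x hx
        rw [hD'_def, mem_insert] at hxD'
        rcases hxD' with h | h
        · exact mem_union_right _ (by rw [h]; exact mem_singleton_self _)
        · rw [hS_def, mem_union] at h
          rcases h with h | h
          · exact mem_union_left _ (mem_sdiff.mpr ⟨hxI, (mem_sdiff.mp h).2⟩)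
          · exact absurd ((mem_sdiff.mp (hYsub h)).2 (hID hxI)) (fun h => h)
      -- xs ∉ I'
      have hxsI : xs ∈ I := hXI hxs
      have hxsD : xs ∈ D := hID hxsI
      have hxsnI' : xs ∉ I' := by
        intro hmem
        obtain ⟨_, hxD'⟩ := hI'I xs hmem
        rw [hD'_def, mem_insert] at hxD'
        rcases hxD' with h | h
        · exact hzxs h.symm
        · rw [hS_def, mem_union] at h
          rcases h with h | h
          · exact (mem_sdiff.mp h).2 hxs
          · exact (mem_sdiff.mp (hYsub h)).2 hxsD
      have hI'Ionly : I' ⊆ I.erase xs := by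
        intro x hx
        rw [mem_erase]
        exact ⟨fun h => hxsnI' (h ▸ hx), (hI'I x hx).1⟩
      -- card bounds for I'
      have hboundB : I'.card ≤ I.card - 1 := by
        have := card_le_card hI'Ionly
        rw [card_erase_of_mem hxsI] at this
        exact this
      have hboundA : I'.card ≤ I.card - X.card + 1 := by
        have h3 := card_le_card hI'sub
        have h4 : ((I \ X) ∪ {z}).card ≤ (I \ X).card + 1 :=
          le_trans (card_union_le _ _) (by simp)
        rw [card_sdiff_of_subset hXI] at h4
        omega
      -- new invariant
      have hinv' : 2 ≤ I'.card → 2 * I'.card + auxf (U'.card - k) ≤ 2 * k := by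
        intro h2'
        have hcase : X.card = I.card ∨ X.card = j + 1 := by
          rw [hXcard]; rcases min_choice I.card (j+1) with h | h <;> [left; right] <;> omega
        rcases hcase with hc | hc
        · -- then I'.card ≤ 1, contradiction with 2 ≤ I'.card
          omega
        · have hM : I'.card + max j 1 ≤ I.card := by
            have e1 : I'.card + j ≤ I.card := by omega
            have e2 : I'.card + 1 ≤ I.card := by omega
            rcases max_choice j 1 with h | h <;> omega
          have hU'k : U'.card - k ≤ j + 1 := by omega
          have hA1 : auxf (U'.card - k) ≤ auxf (j + 1) := auxf_mono hU'k
          have hA2 := auxf_succ j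
          omega
      -- recurse
      have hm' : I'.card ≤ m := by omega
      obtain ⟨G'', hG''F, hG''ne, hG''card, hG''I⟩ := ih G' D' hG'F hD'G' hinv' hm'
      refine ⟨G'', hG''F, hG''ne, ?_, hG''I⟩
      have hUj : U.card = k + j := by omega
      have hU'le : U'.card ≤ k + t + 1 := by omega
      calc (G''.sup id).card ≤ max U'.card (k + t + 1) := hG''card
        _ ≤ max U.card (k + t + 1) := by
            apply max_le (le_trans hU'le (le_max_right _ _)) (le_max_right _ _)
  -- get a starting member A ∈ F
  have hkn : k - 1 ≤ n := by omega
  obtain ⟨S₀, _, hS₀card⟩ := Finset.exists_subset_card_eq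
    (show k - 1 ≤ (Finset.univ : Finset (Fin n)).card by simpa using hkn)
  have hS₀ := hcon S₀ hS₀card
  have hFne : (F.filter (fun e => S₀ ⊆ e)).Nonempty := card_pos.mp (by omega)
  obtain ⟨A, hA⟩ := hFne
  have hAF : A ∈ F := (mem_filter.mp hA).1
  have hAcard : A.card = k := hcard A hAF
  -- apply key to G = {A}
  have hsup : (({A} : Finset (Finset (Fin n))).sup id) = A := Finset.sup_singleton
  have hIA : (({A} : Finset (Finset (Fin n))).sup id).filter
      (fun x => ∀ C ∈ ({A} : Finset (Finset (Fin n))), x ∈ C) ⊆ A := by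
    rw [hsup]; exact filter_subset _ _
  have hIAcard : ((({A} : Finset (Finset (Fin n))).sup id).filter
      (fun x => ∀ C ∈ ({A} : Finset (Finset (Fin n))), x ∈ C)).card ≤ k :=
    hAcard ▸ card_le_card hIA
  obtain ⟨G', hG'F, hG'ne, hG'card, hG'I⟩ := key k {A} A
    (by simpa using hAF) (mem_singleton_self _)
    (by
      intro _
      rw [hsup, hAcard]
      have h0 : auxf (k - k) = 0 := by simp [auxf]
      have hle := card_le_card (filter_subset
        (fun x => ∀ C ∈ ({A} : Finset (Finset (Fin n))), x ∈ C) A)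
      omega)
    hIAcard
  set U' := G'.sup id with hU'_def
  set I' := U'.filter (fun x => ∀ C ∈ G', x ∈ C) with hI'_def
  have hU'le : U'.card ≤ k + t + 1 := by
    have := hG'card
    rw [hsup, hAcard] at this
    omega
  -- choose S* disjoint from U'
  have hfree : k - 1 ≤ ((Finset.univ : Finset (Fin n)) \ U').card := by
    have h1 : ((Finset.univ : Finset (Fin n)) \ U').card = n - U'.card := by
      rw [card_sdiff_of_subset (subset_univ _)]; simp
    omega
  obtain ⟨Sstar, hSsub, hScard⟩ := Finset.exists_subset_card_eq hfree
  have hSdisj : ∀ x ∈ Sstar, x ∉ U' := by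
    intro x hx
    exact (mem_sdiff.mp (hSsub hx)).2
  -- every member containing Sstar is insert u Sstar for u ∈ I'
  have hfilter : F.filter (fun e => Sstar ⊆ e) ⊆ I'.image (fun u => insert u Sstar) := by
    intro C hC
    rw [mem_filter] at hC
    obtain ⟨hCF, hSC⟩ := hC
    have hCcard : C.card = k := hcard C hCF
    have hCS : (C \ Sstar).card = 1 := by rw [card_sdiff_of_subset hSC]; omega
    obtain ⟨u, hu⟩ := Finset.card_eq_one.mp hCS
    have huC : u ∈ C ∧ u ∉ Sstar := by
      have : u ∈ C \ Sstar := by rw [hu]; exact mem_singleton_self _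
      exact ⟨(mem_sdiff.mp this).1, (mem_sdiff.mp this).2⟩
    have hCeq : C = insert u Sstar := by
      have h1 : Sstar ∪ C \ Sstar = C := union_sdiff_of_subset hSC
      rw [hu] at h1
      rw [Finset.insert_eq, Finset.union_comm, ← h1]
    have huI' : u ∈ I' := by
      have huall : ∀ C' ∈ G', u ∈ C' := by
        intro C' hC'
        obtain ⟨w, hw⟩ := hint C hCF C' (hG'F hC')
        rw [mem_inter] at hw
        have hwC' : w ∈ C' := hw.2
        have hwU' : w ∈ U' := (Finset.le_sup (f := id) hC') hwC'
        have hwu : w = u := by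
          have hwC : w ∈ C := hw.1
          rw [hCeq, mem_insert] at hwC
          rcases hwC with h | h
          · exact h
          · exact absurd hwU' (hSdisj w h)
        rw [← hwu]; exact hwC'
      rw [hI'_def, mem_filter]
      obtain ⟨D₀, hD₀⟩ := hG'ne
      exact ⟨(Finset.le_sup (f := id) hD₀) (huall D₀ hD₀), huall⟩
    rw [mem_image]
    exact ⟨u, huI', hCeq.symm⟩
  have hle : (F.filter (fun e => Sstar ⊆ e)).card ≤ 1 := by
    calc (F.filter (fun e => Sstar ⊆ e)).card
        ≤ (I'.image (fun u => insert u Sstar)).card := card_le_card hfilter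
      _ ≤ I'.card := card_image_le
      _ ≤ 1 := hG'I
  have := hcon Sstar hScard
  omega
end

section
/- Let G be a graph on at least 6 edges that contains a matching of size two. Then G contains a subgraph isomorphic to one of: a matching of size three, the disjoint union of an edge and a path with 2 edges sharing a center (a cherry K_{1,2}), or K_4. -/
private lemma card4' {α : Type*} [DecidableEq α] {a b c d : α}
    (hab : a ≠ b) (hac : a ≠ c) (had : a ≠ d) (hbc : b ≠ c) (hbd : b ≠ d) (hcd : c ≠ d) :
    ({a, b, c, d} : Finset α).card = 4 := by
  rw [Finset.card_insert_of_notMem (by simp [hab, hac, had]),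
      Finset.card_insert_of_notMem (by simp [hbc, hbd]),
      Finset.card_insert_of_notMem (by simp [hcd]),
      Finset.card_singleton]

private lemma card5' {α : Type*} [DecidableEq α] {a b c d e : α}
    (hab : a ≠ b) (hac : a ≠ c) (had : a ≠ d) (hae : a ≠ e)
    (hbc : b ≠ c) (hbd : b ≠ d) (hbe : b ≠ e)
    (hcd : c ≠ d) (hce : c ≠ e) (hde : d ≠ e) :
    ({a, b, c, d, e} : Finset α).card = 5 := by
  rw [Finset.card_insert_of_notMem (by simp [hab, hac, had, hae]),
      Finset.card_insert_of_notMem (by simp [hbc, hbd, hbe]),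
      Finset.card_insert_of_notMem (by simp [hcd, hce]),
      Finset.card_insert_of_notMem (by simp [hde]),
      Finset.card_singleton]

/-- A graph with at least 6 edges containing a matching of size two contains a
matching of size three, Q (edge disjoint from a cherry), or K₄. -/
theorem stmt5 {α : Type*} [DecidableEq α] (G : Finset (Finset α))
    (hedge : ∀ e ∈ G, e.card = 2)
    (hcard : 6 ≤ G.card)
    (hmatch : ∃ e ∈ G, ∃ f ∈ G, Disjoint e f) :
    (∃ e₁ ∈ G, ∃ e₂ ∈ G, ∃ e₃ ∈ G,
        Disjoint e₁ e₂ ∧ Disjoint e₁ e₃ ∧ Disjoint e₂ e₃) ∨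
    (∃ a b c x y : α, ({a, b, c, x, y} : Finset α).card = 5 ∧
        ({a, b} : Finset α) ∈ G ∧ ({c, x} : Finset α) ∈ G ∧ ({c, y} : Finset α) ∈ G) ∨
    (∃ a b c d : α, ({a, b, c, d} : Finset α).card = 4 ∧
        ({a, b} : Finset α) ∈ G ∧ ({a, c} : Finset α) ∈ G ∧ ({a, d} : Finset α) ∈ G ∧
        ({b, c} : Finset α) ∈ G ∧ ({b, d} : Finset α) ∈ G ∧ ({c, d} : Finset α) ∈ G) := by
  obtain ⟨e, he, f, hf, hef⟩ := hmatch
  obtain ⟨a, b, hab, rfl⟩ := Finset.card_eq_two.mp (hedge e he)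
  obtain ⟨c, d, hcd, rfl⟩ := Finset.card_eq_two.mp (hedge f hf)
  have hdl := Finset.disjoint_left.mp hef
  have ha' : a ∉ ({c, d} : Finset α) := hdl (by simp)
  have hb' : b ∉ ({c, d} : Finset α) := hdl (by simp)
  simp only [Finset.mem_insert, Finset.mem_singleton, not_or] at ha' hb'
  obtain ⟨hac, had⟩ := ha'
  obtain ⟨hbc, hbd⟩ := hb'
  by_cases hsub : ∀ g ∈ G, g ⊆ ({a, b, c, d} : Finset α)
  · -- all edges inside {a,b,c,d} : K₄
    right; right
    have h4 : ({a, b, c, d} : Finset α).card = 4 := card4' hab hac had hbc hbd hcd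
    set S := ({a, b, c, d} : Finset α).powersetCard 2 with hS
    have hGS : G ⊆ S := by
      intro g hg
      rw [Finset.mem_powersetCard]
      exact ⟨hsub g hg, hedge g hg⟩
    have hScard : S.card = 6 := by
      rw [hS, Finset.card_powersetCard, h4]; rfl
    have hGeq : G = S := Finset.eq_of_subset_of_card_le hGS (by omega)
    have hmem : ∀ x y : α, x ∈ ({a, b, c, d} : Finset α) →
        y ∈ ({a, b, c, d} : Finset α) → x ≠ y → ({x, y} : Finset α) ∈ G := by
      intro x y hx hy hxy
      rw [hGeq, hS, Finset.mem_powersetCard]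
      constructor
      · intro t ht
        simp only [Finset.mem_insert, Finset.mem_singleton] at ht
        rcases ht with rfl | rfl <;> assumption
      · exact Finset.card_pair hxy
    exact ⟨a, b, c, d, h4,
      hmem a b (by simp) (by simp) hab, hmem a c (by simp) (by simp) hac,
      hmem a d (by simp) (by simp) had, hmem b c (by simp) (by simp) hbc,
      hmem b d (by simp) (by simp) hbd, hmem c d (by simp) (by simp) hcd⟩
  · push_neg at hsub
    obtain ⟨g, hg, hgs⟩ := hsub
    obtain ⟨z, hzg, hz⟩ := Finset.not_subset.mp hgs
    simp only [Finset.mem_insert, Finset.mem_singleton, not_or] at hz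
    obtain ⟨hza, hzb, hzc, hzd⟩ := hz
    obtain ⟨u, v, huv, hguv⟩ := Finset.card_eq_two.mp (hedge g hg)
    rw [hguv] at hzg
    simp only [Finset.mem_insert, Finset.mem_singleton] at hzg
    obtain ⟨w, hwz, hgw⟩ : ∃ w, w ≠ z ∧ g = {w, z} := by
      rcases hzg with rfl | rfl
      · exact ⟨v, (Ne.symm huv), by rw [hguv, Finset.pair_comm]⟩
      · exact ⟨u, huv, hguv⟩
    rw [hgw] at hg
    by_cases hwa : w = a
    · subst hwa
      exact Or.inr (Or.inl ⟨c, d, w, b, z, card5' hcd (Ne.symm hac) (Ne.symm hbc) (Ne.symm hzc)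
        (Ne.symm had) (Ne.symm hbd) (Ne.symm hzd) hab (Ne.symm hza) (Ne.symm hzb), hf, he, hg⟩)
    · by_cases hwb : w = b
      · subst hwb
        refine Or.inr (Or.inl ⟨c, d, w, a, z, card5' hcd (Ne.symm hbc) (Ne.symm hac) (Ne.symm hzc)
          (Ne.symm hbd) (Ne.symm had) (Ne.symm hzd) (Ne.symm hab) (Ne.symm hzb) (Ne.symm hza), hf, ?_, hg⟩)
        rw [Finset.pair_comm]; exact he
      · by_cases hwc : w = c
        · subst hwc
          exact Or.inr (Or.inl ⟨a, b, w, d, z, card5' hab hac had (Ne.symm hza)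
            hbc hbd (Ne.symm hzb) hcd (Ne.symm hzc) (Ne.symm hzd), he, hf, hg⟩)
        · by_cases hwd : w = d
          · subst hwd
            refine Or.inr (Or.inl ⟨a, b, w, c, z, card5' hab had hac (Ne.symm hza)
              hbd hbc (Ne.symm hzb) (Ne.symm hcd) (Ne.symm hzd) (Ne.symm hzc), he, ?_, hg⟩)
            rw [Finset.pair_comm]; exact hf
          · -- w outside: matching of size three
            refine Or.inl ⟨{a, b}, he, {c, d}, hf, {w, z}, hg, hef, ?_, ?_⟩
            · rw [Finset.disjoint_left]
              intro x hx hx'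
              simp only [Finset.mem_insert, Finset.mem_singleton] at hx hx'
              rcases hx with rfl | rfl <;> rcases hx' with rfl | rfl <;> simp_all
            · rw [Finset.disjoint_left]
              intro x hx hx'
              simp only [Finset.mem_insert, Finset.mem_singleton] at hx hx'
              rcases hx with rfl | rfl <;> rcases hx' with rfl | rfl <;> simp_all
end

section
/- Let k ≥ 2, and let F be an intersecting family of k-subsets of [n] with n ≥ k + ⌈(√(8k+1)−1)/2⌉ + 2, such that every (k−1)-subset of [n] is contained in at least one member of F. Then for every e ∈ F there exists a subfamily H ⊆ F containing e such that the intersection of all members of H has at most one element and the union of all members of H has at most k + ⌈(√(8k+1)−1)/2⌉ + 2 elements. -/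
open Finset

/-- For every e ∈ F there is a subfamily H containing e with small common
intersection and small vertex set. -/
theorem stmt9 (n k : ℕ) (hk : 2 ≤ k)
    (hn : n ≥ k + ⌈(Real.sqrt (8 * (k : ℝ) + 1) - 1) / 2⌉₊ + 2)
    (F : Finset (Finset (Fin n)))
    (hcard : ∀ e ∈ F, e.card = k)
    (hint : ∀ A ∈ F, ∀ B ∈ F, (A ∩ B).Nonempty)
    (hdeg : ∀ S : Finset (Fin n), S.card = k - 1 → ∃ e ∈ F, S ⊆ e) :
    ∀ e ∈ F, ∃ H ⊆ F, e ∈ H ∧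
      (H.inf id).card ≤ 1 ∧
      (H.sup id).card ≤ k + ⌈(Real.sqrt (8 * (k : ℝ) + 1) - 1) / 2⌉₊ + 2 := by
  intro e he
  set t := ⌈(Real.sqrt (8 * (k : ℝ) + 1) - 1) / 2⌉₊ with ht
  have ht2 : 2 ≤ t := by
    rw [ht]
    have h9 : (3:ℝ) < Real.sqrt (8 * (k:ℝ) + 1) := by
      have hk' : (2:ℝ) ≤ (k:ℝ) := by exact_mod_cast hk
      nlinarith [Real.sq_sqrt (by positivity : (0:ℝ) ≤ 8 * (k:ℝ) + 1),
        Real.sqrt_nonneg (8 * (k:ℝ) + 1)]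
    have h1 : ((1:ℕ):ℝ) < (Real.sqrt (8 * (k:ℝ) + 1) - 1) / 2 := by push_cast; linarith
    exact Nat.lt_ceil.mpr h1
  have htk : 2 * k ≤ t * (t + 1) := by
    have hle : (Real.sqrt (8 * (k:ℝ) + 1) - 1) / 2 ≤ (t : ℝ) := Nat.le_ceil _
    have hs : Real.sqrt (8 * (k:ℝ) + 1) ≤ 2 * (t:ℝ) + 1 := by linarith
    have h1 : (8 : ℝ) * (k:ℝ) + 1 ≤ (2 * (t:ℝ) + 1)^2 := by
      nlinarith [Real.sq_sqrt (by positivity : (0:ℝ) ≤ 8 * (k:ℝ) + 1), Real.sqrt_nonneg (8 * (k:ℝ) + 1)]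
    have h2 : (2 * (k:ℝ)) ≤ (t:ℝ) * ((t:ℝ)+1) := by nlinarith
    exact_mod_cast h2
  have hecard : e.card = k := hcard e he
  -- bound extractors from the potential
  have gbound1 : ∀ v : ℕ, (v - k) * ((v - k) + 1) ≤ 2 * k + 4 → v ≤ k + t + 1 := by
    intro v h
    by_contra hc
    push_neg at hc
    have h1 : t + 2 ≤ v - k := by omega
    have h2 : t + 3 ≤ (v - k) + 1 := by omega
    have := Nat.mul_le_mul h1 h2
    nlinarith
  have gbound2 : ∀ v c : ℕ, 2 ≤ c → 2 * c + (v - k) * ((v - k) + 1) ≤ 2 * k + 4 → v ≤ k + t := by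
    intro v c hc h
    by_contra hcon
    push_neg at hcon
    have h1 : t + 1 ≤ v - k := by omega
    have h2 : t + 2 ≤ (v - k) + 1 := by omega
    have := Nat.mul_le_mul h1 h2
    nlinarith
  -- a single element outside S inside any f ⊇ S from the degree condition
  have hsplit : ∀ S f : Finset (Fin n), S ⊆ f → f ∈ F → S.card = k - 1 →
      ∃ x, f = insert x S := by
    intro S f hSf hfF hSc
    have hc : (f \ S).card = 1 := by
      rw [card_sdiff_of_subset hSf, hcard f hfF, hSc]; omega
    obtain ⟨x, hx⟩ := Finset.card_eq_one.mp hc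
    refine ⟨x, ?_⟩
    conv_lhs => rw [← Finset.union_sdiff_of_subset hSf]
    rw [hx]
    ext a
    simp [or_comm]
  -- main induction on a fuel bound for the cardinality of the common intersection
  have main : ∀ m : ℕ, ∀ H : Finset (Finset (Fin n)), H ⊆ F → e ∈ H →
      (H.inf id).card ≤ m → k + 1 ≤ (H.sup id).card →
      2 * (H.inf id).card + ((H.sup id).card - k) * (((H.sup id).card - k) + 1) ≤ 2 * k + 4 →
      ∃ H' ⊆ F, e ∈ H' ∧ (H'.inf id).card ≤ 1 ∧ (H'.sup id).card ≤ k + t + 2 := by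
    intro m
    induction m with
    | zero =>
      intro H hHF heH hm hv hinv
      refine ⟨H, hHF, heH, by omega, ?_⟩
      have h1 : ((H.sup id).card - k) * (((H.sup id).card - k) + 1) ≤ 2 * k + 4 :=
        le_trans (Nat.le_add_left _ _) hinv
      have := gbound1 _ h1
      omega
    | succ m ih =>
      intro H hHF heH hm hv hinv
      by_cases h1 : (H.inf id).card ≤ 1
      · refine ⟨H, hHF, heH, h1, ?_⟩
        have h2 : ((H.sup id).card - k) * (((H.sup id).card - k) + 1) ≤ 2 * k + 4 :=
          le_trans (Nat.le_add_left _ _) hinv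
        have := gbound1 _ h2
        omega
      push_neg at h1
      set I := H.inf id with hI
      set V := H.sup id with hV
      have hIe : I ⊆ e := Finset.le_iff_subset.mp (Finset.inf_le heH)
      have heV : e ⊆ V := Finset.le_iff_subset.mp (Finset.le_sup (f := id) heH)
      have hIV : I ⊆ V := hIe.trans heV
      have hIcard : I.card ≤ k := by
        have := Finset.card_le_card hIe
        omega
      have hd : (V \ I).card + I.card = V.card := Finset.card_sdiff_add_card_eq_card hIV
      by_cases hbig : k - 1 ≤ (V \ I).card
      · -- terminal step: pick S entirely outside I
        obtain ⟨S, hSsub, hScard⟩ := Finset.exists_subset_card_eq hbig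
        obtain ⟨f, hfF, hSf⟩ := hdeg S hScard
        obtain ⟨x, hfx⟩ := hsplit S f hSf hfF hScard
        have hSV : S ⊆ V := hSsub.trans (Finset.sdiff_subset)
        have hSI : S ∩ I = ∅ := by
          rw [← Finset.disjoint_iff_inter_eq_empty]
          exact Finset.disjoint_of_subset_left hSsub Finset.sdiff_disjoint
        refine ⟨insert f H, Finset.insert_subset hfF hHF, Finset.mem_insert_of_mem heH, ?_, ?_⟩
        · -- intersection ≤ 1
          rw [Finset.inf_insert]
          have : (id f ⊓ H.inf id) = f ∩ I := by simp [Finset.inf_eq_inter, hI]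
          rw [this, hfx]
          by_cases hxI : x ∈ I
          · rw [Finset.insert_inter_of_mem hxI, hSI]
            simp
          · rw [Finset.insert_inter_of_notMem hxI, hSI]
            simp
        · -- union bound
          rw [Finset.sup_insert]
          have hsup : (id f ⊔ H.sup id) = f ∪ V := by simp [Finset.sup_eq_union, hV]
          rw [hsup, hfx]
          have h2 : V.card ≤ k + t := by
            apply gbound2 _ _ h1 hinv
          calc (insert x S ∪ V).card = (insert x (S ∪ V)).card := by rw [Finset.insert_union]
            _ = (insert x V).card := by rw [Finset.union_eq_right.mpr hSV]
            _ ≤ V.card + 1 := Finset.card_insert_le _ _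
            _ ≤ k + t + 2 := by omega
      · -- regular step: S contains all of V \ I
        push_neg at hbig
        obtain ⟨S, hS1, hS2, hScard0⟩ := Finset.exists_subsuperset_card_eq (Finset.sdiff_subset) (Nat.le_add_left _ (k - 1 - (V \ I).card))
          (by omega : (k - 1 - (V \ I).card) + (V \ I).card ≤ V.card)
        have hScard : S.card = k - 1 := by omega
        obtain ⟨f, hfF, hSf⟩ := hdeg S hScard
        obtain ⟨x, hfx⟩ := hsplit S f hSf hfF hScard
        have hSV : S ⊆ V := hS2
        -- S ∩ I = S \ (V \ I)
        have hSI : S ∩ I = S \ (V \ I) := by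
          ext a
          simp only [Finset.mem_inter, Finset.mem_sdiff]
          constructor
          · rintro ⟨haS, haI⟩
            exact ⟨haS, fun h => h.2 haI⟩
          · rintro ⟨haS, h⟩
            refine ⟨haS, ?_⟩
            by_contra haI
            exact h ⟨hSV haS, haI⟩
        have hSIcard : (S ∩ I).card + (V \ I).card = k - 1 := by
          rw [hSI, Finset.card_sdiff_of_subset hS1]
          omega
        have hinf : (insert f H).inf id = f ∩ I := by
          rw [Finset.inf_insert]; simp [Finset.inf_eq_inter, hI]
        have hsup : (insert f H).sup id = f ∪ V := by
          rw [Finset.sup_insert]; simp [Finset.sup_eq_union, hV]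
        by_cases hxV : x ∈ V
        · -- no new vertex
          have hfV : f ⊆ V := by rw [hfx]; exact Finset.insert_subset hxV hSV
          have hsup' : (insert f H).sup id = V := by
            rw [hsup, Finset.union_eq_right.mpr hfV]
          have hm' : (f ∩ I).card ≤ (S ∩ I).card + 1 := by
            rw [hfx]
            by_cases hxI : x ∈ I
            · rw [Finset.insert_inter_of_mem hxI]
              exact Finset.card_insert_le _ _
            · rw [Finset.insert_inter_of_notMem hxI]
              omega
          apply ih (insert f H) (Finset.insert_subset hfF hHF) (Finset.mem_insert_of_mem heH)
          · rw [hinf]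
            omega
          · rw [hsup']
            exact hv
          · rw [hinf, hsup']
            have hgen : ∀ G : ℕ, (V.card - k) * ((V.card - k) + 1) = G →
                2 * I.card + G ≤ 2 * k + 4 → 2 * (f ∩ I).card + G ≤ 2 * k + 4 := by
              intro G hG hbase
              omega
            exact hgen _ rfl hinv
        · -- one new vertex, which is outside I
          have hxI : x ∉ I := fun h => hxV (hIV h)
          have hsup' : (insert f H).sup id = insert x V := by
            rw [hsup, hfx, Finset.insert_union, Finset.union_eq_right.mpr hSV]
          have hvc : (insert x V).card = V.card + 1 := Finset.card_insert_of_notMem hxV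
          have hm' : (f ∩ I).card = (S ∩ I).card := by
            rw [hfx, Finset.insert_inter_of_notMem hxI]
          obtain ⟨g, hg⟩ : ∃ g, V.card = k + g := ⟨V.card - k, by omega⟩
          apply ih (insert f H) (Finset.insert_subset hfF hHF) (Finset.mem_insert_of_mem heH)
          · rw [hinf]
            omega
          · rw [hsup', hvc]
            omega
          · rw [hinf, hsup', hvc, hm', hg]
            rw [hg] at hinv
            have e1 : k + g - k = g := by omega
            have e2 : k + g + 1 - k = g + 1 := by omega
            rw [e1] at hinv
            rw [e2]
            have hexp : (g + 1) * ((g + 1) + 1) = g * (g + 1) + 2 * (g + 1) := by ring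
            have hgen : ∀ G : ℕ, g * (g + 1) = G →
                2 * I.card + G ≤ 2 * k + 4 → 2 * (S ∩ I).card + (G + 2 * (g + 1)) ≤ 2 * k + 4 := by
              intro G hG hbase
              omega
            rw [hexp]
            exact hgen _ rfl hinv
  -- initial step: build a two-element family from e
  have hkn : k < n := by omega
  obtain ⟨u, hu⟩ : ∃ u : Fin n, u ∉ e := by
    by_contra h
    push_neg at h
    have h2 : (Finset.univ : Finset (Fin n)) ⊆ e := fun a _ => h a
    have h3 := Finset.card_le_card h2
    rw [Finset.card_univ, Fintype.card_fin, hecard] at h3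
    omega
  have hie : (insert u e).card = k + 1 := by
    rw [Finset.card_insert_of_notMem hu, hecard]
  obtain ⟨S, hS1, hS2, hScard0⟩ := Finset.exists_subsuperset_card_eq
    (by simp [Finset.singleton_subset_iff] : ({u} : Finset (Fin n)) ⊆ insert u e)
    (Nat.le_add_left _ (k - 2))
    (by rw [Finset.card_singleton, hie]; omega : (k - 2) + ({u} : Finset (Fin n)).card ≤ (insert u e).card)
  have hScard : S.card = k - 1 := by
    rw [hScard0, Finset.card_singleton]; omega
  obtain ⟨f, hfF, hSf⟩ := hdeg S hScard
  obtain ⟨x, hfx⟩ := hsplit S f hSf hfF hScard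
  have huS : u ∈ S := hS1 (Finset.mem_singleton_self u)
  have hSe : (S ∩ e).card ≤ k - 2 := by
    have hsub : S ∩ e ⊆ S.erase u := by
      intro a ha
      rw [Finset.mem_erase]
      obtain ⟨haS, hae⟩ := Finset.mem_inter.mp ha
      exact ⟨fun h => hu (h ▸ hae), haS⟩
    have := Finset.card_le_card hsub
    rw [Finset.card_erase_of_mem huS, hScard] at this
    omega
  set H₁ : Finset (Finset (Fin n)) := insert f {e} with hH₁
  have hH₁F : H₁ ⊆ F := Finset.insert_subset hfF (Finset.singleton_subset_iff.mpr he)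
  have heH₁ : e ∈ H₁ := Finset.mem_insert_of_mem (Finset.mem_singleton_self e)
  have hinf₁ : H₁.inf id = f ∩ e := by
    rw [hH₁, Finset.inf_insert, Finset.inf_singleton]
    simp [Finset.inf_eq_inter]
  have hsup₁ : H₁.sup id = f ∪ e := by
    rw [hH₁, Finset.sup_insert, Finset.sup_singleton]
    simp [Finset.sup_eq_union]
  have hue : insert u e ⊆ f ∪ e := by
    intro a ha
    rcases Finset.mem_insert.mp ha with h | h
    · exact Finset.mem_union_left _ (h ▸ hSf huS)
    · exact Finset.mem_union_right _ h
  have hv₁ : k + 1 ≤ (H₁.sup id).card := by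
    rw [hsup₁]
    calc k + 1 = (insert u e).card := hie.symm
      _ ≤ (f ∪ e).card := Finset.card_le_card hue
  by_cases hxV : x ∈ insert u e
  · -- V₁ = insert u e
    have hfsub : f ⊆ insert u e := by
      rw [hfx]
      exact Finset.insert_subset hxV (hS2)
    have hVeq : f ∪ e = insert u e := by
      apply Finset.Subset.antisymm
      · exact Finset.union_subset hfsub (Finset.subset_insert u e)
      · exact hue
    have hm₁ : (H₁.inf id).card ≤ k - 1 := by
      rw [hinf₁, hfx]
      by_cases hxe : x ∈ e
      · rw [Finset.insert_inter_of_mem hxe]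
        have := Finset.card_insert_le x (S ∩ e)
        omega
      · rw [Finset.insert_inter_of_notMem hxe]
        omega
    apply main (k - 1) H₁ hH₁F heH₁ hm₁ hv₁
    rw [hinf₁, hsup₁, hVeq, hie]
    have e1 : k + 1 - k = 1 := by omega
    rw [e1]
    have : (f ∩ e).card ≤ k - 1 := by rw [hinf₁] at hm₁; exact hm₁
    omega
  · -- new vertex x : intersection drops to ≤ k−2, V₁ ≤ k+2
    have hxe : x ∉ e := fun h => hxV (Finset.mem_insert_of_mem h)
    have hm₁ : (H₁.inf id).card ≤ k - 2 := by
      rw [hinf₁, hfx, Finset.insert_inter_of_notMem hxe]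
      exact hSe
    have hVsub : f ∪ e ⊆ insert x (insert u e) := by
      rw [hfx]
      intro a ha
      rcases Finset.mem_union.mp ha with h | h
      · rcases Finset.mem_insert.mp h with h' | h'
        · exact h' ▸ Finset.mem_insert_self _ _
        · exact Finset.mem_insert_of_mem (hS2 h')
      · exact Finset.mem_insert_of_mem (Finset.mem_insert_of_mem h)
    have hv₁' : (H₁.sup id).card ≤ k + 2 := by
      rw [hsup₁]
      calc (f ∪ e).card ≤ (insert x (insert u e)).card := Finset.card_le_card hVsub
        _ ≤ (insert u e).card + 1 := Finset.card_insert_le _ _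
        _ = k + 2 := by rw [hie]
    apply main (k - 2) H₁ hH₁F heH₁ hm₁ hv₁
    have hcases : (H₁.sup id).card - k = 1 ∨ (H₁.sup id).card - k = 2 := by omega
    rcases hcases with h | h <;> rw [h] <;> omega
end

section
/- Let F be an intersecting family of k-subsets of a vertex set V, let v ∈ V, and let X_0, Y_0 be disjoint subsets of V \ {v}, each of size at least k + 1, such that for every (k−1)-subset W of X_0 and every (k−1)-subset W of Y_0, the set W ∪ {v} belongs to F. Suppose |X_0|, |Y_0| ≥ k + ⌈ℓ/2⌉ + 1 for some positive integer ℓ, and X_0 ∪ Y_0 ∪ {v} = V with |V \ (X_0 ∪ Y_0 ∪ {v})| = 0. Then for every (k−1)-subset W ⊆ V \ {v}, the set W ∪ {v} is a member of F, provided every (k−1)-subset of V has positive degree in F. -/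
/-!
Induct on `min |W ∩ X| |W ∩ Y|`. When it is zero, `W` lies in `X` or in `Y` and the stars
apply. Otherwise take an edge `e ⊇ W`; if `v ∉ e`, then `e ⊆ X ∪ Y`, and because `X` and `Y`
are large there is an `r`-set `W' ⊆ (X ∪ Y) \ e` whose own minimum is smaller. By induction
`W' ∪ {v} ∈ F`, and it is disjoint from `e`, contradicting that `F` is intersecting.
-/

open Finset

namespace Finset

variable {α : Type*} [DecidableEq α]

lemma card_inter_le_card_inter_add_card_sdiff (s t u : Finset α) :
    #(s ∩ u) ≤ #(t ∩ u) + #(s \ t) := by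
  have hsub : s ∩ u ⊆ (t ∩ u) ∪ (s \ t) := by
    intro x hx
    by_cases hxt : x ∈ t <;> simp_all
  exact (card_le_card hsub).trans (card_union_le _ _)

/-- Fill `W` with as much of `Y \ e` as possible; the rest comes from `X`. -/
lemma exists_disjoint_card_inter_le {X Y e : Finset α} {r : ℕ} (hXY : Disjoint X Y)
    (hY : r + 2 ≤ #Y) (hr : r + #e ≤ #(X ∪ Y)) :
    ∃ W ⊆ X ∪ Y, Disjoint W e ∧ #W = r ∧ #(W ∩ X) ≤ #(e ∩ Y) - 2 := by
  by_cases hYe : r ≤ #(Y \ e)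
  · obtain ⟨W, hW, hWr⟩ := exists_subset_card_eq hYe
    have hWY : W ⊆ Y := hW.trans sdiff_subset
    have hWX : W ∩ X = ∅ := disjoint_iff_inter_eq_empty.mp (hXY.symm.mono_left hWY)
    refine ⟨W, hWY.trans subset_union_right, disjoint_of_subset_left hW sdiff_disjoint, hWr, ?_⟩
    simp [hWX]
  · have hsub : Y \ e ⊆ (X ∪ Y) \ e := sdiff_subset_sdiff subset_union_right subset_rfl
    have hle : r ≤ #((X ∪ Y) \ e) := le_trans (by omega) (le_card_sdiff e (X ∪ Y))
    obtain ⟨W, hYW, hW, hWr⟩ := exists_subsuperset_card_eq hsub (by omega) hle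
    have hWXY : W ⊆ X ∪ Y := hW.trans sdiff_subset
    have hsplit : #(W ∩ X) + #(W ∩ Y) ≤ #W := by
      rw [← card_union_of_disjoint (hXY.mono inter_subset_right inter_subset_right)]
      exact card_le_card (union_subset inter_subset_left inter_subset_left)
    have hWY : #(Y \ e) ≤ #(W ∩ Y) := card_le_card (subset_inter hYW sdiff_subset)
    have hYsplit := card_sdiff_add_card_inter Y e
    rw [inter_comm Y e] at hYsplit
    exact ⟨W, hWXY, disjoint_of_subset_left hW sdiff_disjoint, hWr, by omega⟩

lemma exists_disjoint_min_card_inter_le {X Y e : Finset α} {r : ℕ} (hXY : Disjoint X Y)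
    (hX : r + 2 ≤ #X) (hY : r + 2 ≤ #Y) (hr : r + #e ≤ #(X ∪ Y)) :
    ∃ W ⊆ X ∪ Y, Disjoint W e ∧ #W = r ∧
      min #(W ∩ X) #(W ∩ Y) ≤ min #(e ∩ X) #(e ∩ Y) - 2 := by
  rcases le_total #(e ∩ Y) #(e ∩ X) with h | h
  · obtain ⟨W, hW, hWe, hWr, hWX⟩ := exists_disjoint_card_inter_le hXY hY hr
    exact ⟨W, hW, hWe, hWr, by omega⟩
  · rw [union_comm] at hr ⊢
    obtain ⟨W, hW, hWe, hWr, hWY⟩ := exists_disjoint_card_inter_le hXY.symm hX hr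
    exact ⟨W, hW, hWe, hWr, by omega⟩

end Finset

section Stars

variable {α : Type*} [Fintype α] [DecidableEq α] {F : Finset (Finset α)} {r : ℕ} {v : α}
  {X Y : Finset α}

lemma subset_of_union_singleton_eq_univ (hcover : X ∪ Y ∪ {v} = univ) {s : Finset α}
    (hv : v ∉ s) : s ⊆ X ∪ Y := fun x hx => by
  have hx' := hcover ▸ mem_univ x
  simp only [mem_union, mem_singleton] at hx' ⊢
  rcases hx' with h | rfl
  exacts [h, absurd hx hv]

theorem union_singleton_mem_of_stars (hcard : ∀ e ∈ F, #e = r + 1)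
    (hint : ∀ A ∈ F, ∀ B ∈ F, (A ∩ B).Nonempty) (hvX : v ∉ X) (hvY : v ∉ Y)
    (hXY : Disjoint X Y) (hX : r + 2 ≤ #X) (hY : r + 2 ≤ #Y) (hcover : X ∪ Y ∪ {v} = univ)
    (hXstar : ∀ W ⊆ X, #W = r → W ∪ {v} ∈ F) (hYstar : ∀ W ⊆ Y, #W = r → W ∪ {v} ∈ F)
    (hdeg : ∀ W ⊆ X ∪ Y, #W = r → ∃ e ∈ F, W ⊆ e) {W : Finset α} (hW : W ⊆ X ∪ Y)
    (hWr : #W = r) : W ∪ {v} ∈ F := by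
  induction hm : min #(W ∩ X) #(W ∩ Y) using Nat.strong_induction_on generalizing W with
  | _ m ih =>
  rcases Nat.eq_zero_or_pos m with rfl | hm0
  · rcases Nat.min_eq_zero_iff.mp hm with h | h
    · have hWX := disjoint_iff_inter_eq_empty.mpr (card_eq_zero.mp h)
      exact hYstar W (hWX.left_le_of_le_sup_left hW) hWr
    · have hWY := disjoint_iff_inter_eq_empty.mpr (card_eq_zero.mp h)
      exact hXstar W (hWY.left_le_of_le_sup_right hW) hWr
  obtain ⟨e, he, hWe⟩ := hdeg W hW hWr
  have hvW : v ∉ W := fun h => by simpa [hvX, hvY] using hW h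
  have hWv : #(W ∪ {v}) = r + 1 := by
    rw [card_union_of_disjoint (disjoint_singleton_right.mpr hvW), hWr, card_singleton]
  have heW : #(e \ W) = 1 := by rw [card_sdiff_of_subset hWe, hcard e he, hWr]; omega
  by_cases hve : v ∈ e
  · rwa [eq_of_subset_of_card_le (union_subset hWe (singleton_subset_iff.mpr hve))
      (by rw [hcard e he, hWv])]
  have heXY : e ⊆ X ∪ Y := subset_of_union_singleton_eq_univ hcover hve
  have heX := card_inter_le_card_inter_add_card_sdiff e W X
  have heY := card_inter_le_card_inter_add_card_sdiff e W Y
  obtain ⟨W', hW', hW'e, hW'r, hmin⟩ := exists_disjoint_min_card_inter_le hXY hX hY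
    (e := e) (by rw [card_union_of_disjoint hXY, hcard e he]; omega)
  have hW'v := ih _ (by omega) hW' hW'r rfl
  obtain ⟨x, hx⟩ := hint e he _ hW'v
  simp only [mem_inter, mem_union, mem_singleton] at hx
  rcases hx with ⟨hxe, hxW' | rfl⟩
  exacts [absurd hxe (disjoint_left.mp hW'e hxW'), absurd hxe hve]

end Stars

theorem stmt11_general {α : Type*} [Fintype α] [DecidableEq α] (k : ℕ)
    (F : Finset (Finset α))
    (hcard : ∀ e ∈ F, e.card = k)
    (hint : ∀ A ∈ F, ∀ B ∈ F, (A ∩ B).Nonempty)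
    (v : α) (X₀ Y₀ : Finset α)
    (hvX : v ∉ X₀) (hvY : v ∉ Y₀)
    (hdisj : Disjoint X₀ Y₀)
    (hXbig : k + 1 ≤ X₀.card) (hYbig : k + 1 ≤ Y₀.card)
    (hcover : X₀ ∪ Y₀ ∪ {v} = Finset.univ)
    (hXstar : ∀ W ⊆ X₀, W.card = k - 1 → W ∪ {v} ∈ F)
    (hYstar : ∀ W ⊆ Y₀, W.card = k - 1 → W ∪ {v} ∈ F)
    (hdeg : ∀ W : Finset α, W.card = k - 1 → ∃ e ∈ F, W ⊆ e) :
    ∀ W : Finset α, v ∉ W → W.card = k - 1 → W ∪ {v} ∈ F := by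
  intro W hvW hWk
  rcases k with _ | r
  · simpa using hcard _ (hXstar ∅ (empty_subset _) rfl)
  exact union_singleton_mem_of_stars hcard hint hvX hvY hdisj hXbig hYbig hcover hXstar hYstar
    (fun W _ => hdeg W) (subset_of_union_singleton_eq_univ hcover hvW) hWk

/-- Bootstrapping step: two large complete stars centered at v covering the whole
vertex set together with positive codegree force every (k−1)-set W ⊆ V \ {v} to
satisfy W ∪ {v} ∈ F. -/
theorem stmt11 {α : Type*} [Fintype α] [DecidableEq α] (k ℓ : ℕ) (hℓ : 1 ≤ ℓ)
    (F : Finset (Finset α))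
    (hcard : ∀ e ∈ F, e.card = k)
    (hint : ∀ A ∈ F, ∀ B ∈ F, (A ∩ B).Nonempty)
    (v : α) (X₀ Y₀ : Finset α)
    (hvX : v ∉ X₀) (hvY : v ∉ Y₀)
    (hdisj : Disjoint X₀ Y₀)
    (hXbig : k + 1 ≤ X₀.card) (hYbig : k + 1 ≤ Y₀.card)
    (hXbig' : k + ⌈(ℓ : ℝ) / 2⌉₊ + 1 ≤ X₀.card)
    (hYbig' : k + ⌈(ℓ : ℝ) / 2⌉₊ + 1 ≤ Y₀.card)
    (hcover : X₀ ∪ Y₀ ∪ {v} = Finset.univ)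
    (hXstar : ∀ W ⊆ X₀, W.card = k - 1 → W ∪ {v} ∈ F)
    (hYstar : ∀ W ⊆ Y₀, W.card = k - 1 → W ∪ {v} ∈ F)
    (hdeg : ∀ W : Finset α, W.card = k - 1 → ∃ e ∈ F, W ⊆ e) :
    ∀ W : Finset α, v ∉ W → W.card = k - 1 → W ∪ {v} ∈ F :=
  stmt11_general k F hcard hint v X₀ Y₀ hvX hvY hdisj hXbig hYbig hcover hXstar hYstar hdeg
end

section
/- Let F be an intersecting family of k-subsets of a vertex set V, let F' ⊆ F be a subfamily, and suppose f ∈ F' and v ∉ f. If every (k−2)-subset W of V \ V(F') satisfies d_F(W) ≥ n − k + 1 where n = |V| and n − k + 1 > k, and |V \ V(F')| ≥ k − 2, then not every size-two vertex cover of F' contains v. Equivalently: if every size-two vertex cover of F' contains v and |V(F')| ≤ n − k + 2, then v belongs to every member of F' — in particular any edge e ∈ F' contains v. -/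
/-!
Suppose `v` misses some `g ∈ F'`. Every size-two cover of `F'` contains `v` and meets `g`, so it
is `{v, x}` with `x ∈ g`: there are at most `k` of them. Pick a `(k - 2)`-set `W` outside `V(F')`.
For each `e ∈ F` containing `W`, the pair `e \ W` is a size-two cover of `F'`, because `F` is
intersecting and `W` misses every member of `F'`. As `e ↦ e \ W` is injective, `d_F(W) ≤ k`,
contradicting `d_F(W) ≥ n - k + 1 > k`. For `k = 1` the family `F` has at most one member.
-/

open Finset

variable {α : Type*} [DecidableEq α]

lemma eq_pair_of_card_eq_two {T : Finset α} {v x : α} (hT : T.card = 2) (hv : v ∈ T)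
    (hx : x ∈ T) (hxv : x ≠ v) : T = {v, x} :=
  (eq_of_subset_of_card_le (insert_subset hv (singleton_subset_iff.2 hx))
    (by rw [hT, card_pair hxv.symm])).symm

lemma mem_image_pair_of_isCover {F' : Finset (Finset α)} {g T : Finset α} {v : α}
    (hcov : ∀ T : Finset α, T.card = 2 → (∀ g ∈ F', (T ∩ g).Nonempty) → v ∈ T)
    (hg : g ∈ F') (hvg : v ∉ g) (hT : T.card = 2) (hTcov : ∀ g ∈ F', (T ∩ g).Nonempty) :
    T ∈ g.image (fun x => ({v, x} : Finset α)) := by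
  obtain ⟨x, hx⟩ := hTcov g hg
  obtain ⟨hxT, hxg⟩ := mem_inter.1 hx
  have hxv : x ≠ v := fun h => hvg (h ▸ hxg)
  exact mem_image.2 ⟨x, hxg, (eq_pair_of_card_eq_two hT (hcov T hT hTcov) hxT hxv).symm⟩

lemma sdiff_inter_nonempty_of_disjoint {e W g : Finset α} (heg : (e ∩ g).Nonempty)
    (hWg : Disjoint W g) : ((e \ W) ∩ g).Nonempty := by
  obtain ⟨x, hx⟩ := heg
  obtain ⟨hxe, hxg⟩ := mem_inter.1 hx
  exact ⟨x, mem_inter.2 ⟨mem_sdiff.2 ⟨hxe, fun hxW => disjoint_left.1 hWg hxW hxg⟩, hxg⟩⟩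

lemma card_filter_superset_le_of_isCover {F F' : Finset (Finset α)} {W g : Finset α} {v : α}
    {k : ℕ} (hcard : ∀ e ∈ F, e.card = k)
    (hint : ∀ A ∈ F, ∀ B ∈ F', (A ∩ B).Nonempty) (hW : ∀ g ∈ F', Disjoint W g)
    (hWk : W.card + 2 = k)
    (hcov : ∀ T : Finset α, T.card = 2 → (∀ g ∈ F', (T ∩ g).Nonempty) → v ∈ T)
    (hg : g ∈ F') (hvg : v ∉ g) :
    (F.filter (fun e => W ⊆ e)).card ≤ g.card := by
  have hmaps : Set.MapsTo (· \ W) (F.filter (fun e => W ⊆ e))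
      (g.image (fun x => ({v, x} : Finset α))) := by
    intro e he
    obtain ⟨heF, hWe⟩ := mem_filter.1 he
    have hcard2 : (e \ W).card = 2 := by
      rw [card_sdiff_of_subset hWe, hcard e heF]
      omega
    exact mem_image_pair_of_isCover hcov hg hvg hcard2
      fun g' hg' => sdiff_inter_nonempty_of_disjoint (hint e heF g' hg') (hW g' hg')
  have hinj : Set.InjOn (· \ W) (F.filter (fun e => W ⊆ e) : Set (Finset α)) := by
    intro e₁ he₁ e₂ he₂ h
    rw [← sdiff_union_of_subset (mem_filter.1 he₁).2,
      ← sdiff_union_of_subset (mem_filter.1 he₂).2]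
    exact congrArg (· ∪ W) h
  exact (card_le_card_of_injOn _ hmaps hinj).trans card_image_le

lemma card_le_one_of_intersecting_of_card_eq_one {F : Finset (Finset α)}
    (hcard : ∀ e ∈ F, e.card = 1) (hint : ∀ A ∈ F, ∀ B ∈ F, (A ∩ B).Nonempty) :
    F.card ≤ 1 := by
  refine card_le_one.2 fun A hA B hB => ?_
  obtain ⟨a, rfl⟩ := card_eq_one.1 (hcard A hA)
  obtain ⟨b, rfl⟩ := card_eq_one.1 (hcard B hB)
  obtain ⟨x, hx⟩ := hint _ hA _ hB
  simp only [mem_inter, mem_singleton] at hx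
  rw [← hx.1, ← hx.2]

theorem stmt16_general (n k : ℕ)
    (F F' : Finset (Finset (Fin n)))
    (hcard : ∀ e ∈ F, e.card = k)
    (hint : ∀ A ∈ F, ∀ B ∈ F, (A ∩ B).Nonempty)
    (hF' : F' ⊆ F)
    (v : Fin n)
    (hbig : n - k + 1 > k)
    (hroom : k - 2 ≤ (Finset.univ \ F'.sup id : Finset (Fin n)).card)
    (hdeg : ∀ W : Finset (Fin n), W ⊆ Finset.univ \ F'.sup id → W.card = k - 2 →
      (F.filter (fun e => W ⊆ e)).card ≥ n - k + 1)
    (hcov : ∀ T : Finset (Fin n), T.card = 2 → (∀ g ∈ F', (T ∩ g).Nonempty) → v ∈ T) :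
    ∀ g ∈ F', v ∈ g := by
  intro g hg
  by_contra hvg
  have hgk := hcard g (hF' hg)
  have hk : 1 ≤ k := hgk ▸ card_pos.2 (by simpa using hint g (hF' hg) g (hF' hg))
  obtain ⟨W, hWsub, hWcard⟩ := exists_subset_card_eq hroom
  have hdegW := hdeg W hWsub hWcard
  have hdegW_le : (F.filter (fun e => W ⊆ e)).card ≤ k := by
    rcases hk.eq_or_lt with rfl | hk2
    · exact (card_filter_le _ _).trans
        (card_le_one_of_intersecting_of_card_eq_one hcard hint)
    · have hW : ∀ g' ∈ F', Disjoint W g' := fun g' hg' =>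
        (disjoint_of_subset_left hWsub sdiff_disjoint).mono_right (le_sup (f := id) hg')
      exact hgk ▸ card_filter_superset_le_of_isCover hcard
        (fun A hA B hB => hint A hA B (hF' hB)) hW (by omega) hcov hg hvg
  omega

/-- If every size-two vertex cover of F' contains v, V(F') is not too large, and
(k−2)-subsets outside V(F') have large degree in F, then v lies in every member
of F'. -/
theorem stmt16 (n k : ℕ)
    (F F' : Finset (Finset (Fin n)))
    (hcard : ∀ e ∈ F, e.card = k)
    (hint : ∀ A ∈ F, ∀ B ∈ F, (A ∩ B).Nonempty)
    (hF' : F' ⊆ F)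
    (v : Fin n)
    (hbig : n - k + 1 > k)
    (hroom : k - 2 ≤ (Finset.univ \ F'.sup id : Finset (Fin n)).card)
    (hsmall : (F'.sup id).card ≤ n - k + 2)
    (hdeg : ∀ W : Finset (Fin n), W ⊆ Finset.univ \ F'.sup id → W.card = k - 2 →
      (F.filter (fun e => W ⊆ e)).card ≥ n - k + 1)
    (hcov : ∀ T : Finset (Fin n), T.card = 2 → (∀ g ∈ F', (T ∩ g).Nonempty) → v ∈ T) :
    ∀ g ∈ F', v ∈ g :=
  stmt16_general n k F F' hcard hint hF' v hbig hroom hdeg hcov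
end
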